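/- arXiv:cs/0511103 — 8 statements merged into one kernel-verified Lean document; each statement's English description precedes it below -/
import Mathlib

section
/- For all real x with log p < x ≤ 0 (where 0 < p < 1), e^x · log(e^x − p) − x·e^x ≤ −p. -/
theorem stmt_0 (p : ℝ) (hp0 : 0 < p) (hp1 : p < 1) :
    ∀ x : ℝ, Real.log p < x → x ≤ 0 →
      Real.exp x * Real.log (Real.exp x - p) - x * Real.exp x ≤ -p := by
  intro x hx hx0
  have ht : p < Real.exp x := by
    calc p = Real.exp (Real.log p) := (Real.exp_log hp0).symm
    _ < Real.exp x := Real.exp_lt_exp.mpr hx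
  have htp : 0 < Real.exp x - p := by linarith
  have hepos := Real.exp_pos x
  have hlog : Real.log (Real.exp x - p) - Real.log (Real.exp x) ≤ -p / Real.exp x := by
    have h := Real.log_le_sub_one_of_pos (x := (Real.exp x - p) / Real.exp x) (by positivity)
    rw [Real.log_div (by linarith) (Real.exp_ne_zero x)] at h
    have heq : (Real.exp x - p) / Real.exp x - 1 = -p / Real.exp x := by field_simp; ring
    linarith
  have hxx : x * Real.exp x = Real.log (Real.exp x) * Real.exp x := by rw [Real.log_exp]
  have hmul := mul_le_mul_of_nonneg_left hlog hepos.le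
  have hcancel : Real.exp x * (-p / Real.exp x) = -p := by field_simp
  nlinarith [hmul, hcancel, hxx]
end

section
/- For all real x with log p < x ≤ 0 (where 0 < p < 1), e^x · log(e^x − p) − e^x·(x+1) + e^{2x}/(e^x − p) ≥ 0. -/
theorem stmt_1 (p : ℝ) (hp0 : 0 < p) (hp1 : p < 1) :
    ∀ x : ℝ, Real.log p < x → x ≤ 0 →
      0 ≤ Real.exp x * Real.log (Real.exp x - p) - Real.exp x * (x + 1)
          + Real.exp (2 * x) / (Real.exp x - p) := by
  intro x hx _
  have ht : 0 < Real.exp x - p := by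
    have h1 := Real.exp_lt_exp.mpr hx
    rw [Real.exp_log hp0] at h1
    linarith
  set t := Real.exp x with htdef
  have htpos : 0 < t := Real.exp_pos x
  have key : Real.log (t / (t - p)) ≤ t / (t - p) - 1 :=
    Real.log_le_sub_one_of_pos (by positivity)
  have hlog : Real.log (t / (t - p)) = x - Real.log (t - p) := by
    rw [Real.log_div (ne_of_gt htpos) (ne_of_gt ht), htdef, Real.log_exp]
  have h2 : Real.exp (2 * x) = t * t := by
    rw [two_mul, Real.exp_add]
  have hsum : 0 ≤ Real.log (t - p) - (x + 1) + t / (t - p) := by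
    rw [hlog] at key; linarith
  have hdiv : Real.exp (2 * x) / (t - p) = t * (t / (t - p)) := by
    rw [h2, mul_div_assoc]
  rw [hdiv]
  nlinarith [mul_nonneg htpos.le hsum]
end

section
/- For all real x with log p < x ≤ 0 (where 0 < p < 1), the function F(x) = (e^x − p)·log(e^x − p) − (e^x − p)·(x+1) + e^x is nonnegative. -/
theorem stmt_2 (p : ℝ) (hp0 : 0 < p) (hp1 : p < 1) :
    ∀ x : ℝ, Real.log p < x → x ≤ 0 →
      0 ≤ (Real.exp x - p) * Real.log (Real.exp x - p)
          - (Real.exp x - p) * (x + 1) + Real.exp x := by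
  intro x hx hx0
  set y := Real.exp x - p with hy
  have hy0 : 0 < y := by
    have : p < Real.exp x := by
      calc p = Real.exp (Real.log p) := (Real.exp_log hp0).symm
        _ < Real.exp x := Real.exp_lt_exp.2 hx
    simpa [hy] using sub_pos.2 this
  have hyp : y + p = Real.exp x := by simp [hy]
  have hxeq : x = Real.log (y + p) := by
    rw [hyp, Real.log_exp]
  -- log ((y+p)/y) ≤ (y+p)/y - 1 = p/y
  have hlog : Real.log ((y + p) / y) ≤ p / y := by
    have h1 : Real.log ((y + p) / y) ≤ (y + p) / y - 1 :=
      Real.log_le_sub_one_of_pos (by positivity)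
    have : (y + p) / y - 1 = p / y := by field_simp; ring
    linarith [this ▸ h1]
  have hkey : y * (Real.log (y + p) - Real.log y) ≤ p := by
    have h2 : Real.log (y + p) - Real.log y ≤ p / y := by
      rw [← Real.log_div (by positivity : y + p ≠ 0) (ne_of_gt hy0)]; exact hlog
    calc y * (Real.log (y + p) - Real.log y) ≤ y * (p / y) :=
          mul_le_mul_of_nonneg_left h2 hy0.le
      _ = p := by field_simp
  have : y * Real.log y - y * (x + 1) + Real.exp x
      = p - y * (Real.log (y + p) - Real.log y) := by
    rw [hxeq, Real.exp_log (by positivity)]; ring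
  linarith [this ▸ sub_nonneg.2 hkey]
end

section
/- Let 0 < p < 1 and define g on [p, ∞) by g(y) = h(y) − (1−p)·h((y−p)/(1−p)) for p ≤ y ≤ 1 and g(y) = 0 for y > 1, where h is the binary entropy function with natural logarithms. Then the function x ↦ g(e^x) is convex on [log p, ∞). -/
/-- Binary entropy function with natural logarithms; `binEnt 0 = binEnt 1 = 0`. -/
noncomputable def binEnt (t : ℝ) : ℝ := Real.negMulLog t + Real.negMulLog (1 - t)

/-- The function `g` from the binary erasure CEO problem. -/
noncomputable def gFun (p y : ℝ) : ℝ :=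
  if y ≤ 1 then binEnt y - (1 - p) * binEnt ((y - p) / (1 - p)) else 0

lemma negMulLog_div_aux {a c : ℝ} (ha : 0 ≤ a) (hc : 0 < c) :
    c * Real.negMulLog (a / c) = Real.negMulLog a + a * Real.log c := by
  rcases eq_or_lt_of_le ha with h | h
  · simp [← h, Real.negMulLog]
  · rw [Real.negMulLog, Real.negMulLog, Real.log_div h.ne' hc.ne']
    field_simp
    ring

lemma gFun_eq_aux {p y : ℝ} (hp0 : 0 < p) (hp1 : p < 1) (hy : p ≤ y) (hy1 : y ≤ 1) :
    gFun p y = Real.negMulLog y - Real.negMulLog (y - p) - (1 - p) * Real.log (1 - p) := by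
  have hc : (0:ℝ) < 1 - p := by linarith
  have h1 : 1 - (y - p) / (1 - p) = (1 - y) / (1 - p) := by field_simp; ring
  rw [gFun, if_pos hy1, binEnt, binEnt, h1, mul_add]
  have h2 := negMulLog_div_aux (a := y - p) (by linarith) hc
  have h3 := negMulLog_div_aux (a := 1 - y) (by linarith) hc
  linarith [h2, h3]

theorem stmt_4 (p : ℝ) (hp0 : 0 < p) (hp1 : p < 1) :
    ConvexOn ℝ (Set.Ici (Real.log p)) (fun x : ℝ => gFun p (Real.exp x)) := by
  have hc : (0:ℝ) < 1 - p := by linarith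
  set D : Set ℝ := Set.Ici (Real.log p) with hD
  have hDint : interior D = Set.Ioi (Real.log p) := interior_Ici
  set G : ℝ → ℝ := fun x =>
    -x * Real.exp x - Real.negMulLog (Real.exp x - p) - (1 - p) * Real.log (1 - p) with hGdef
  have hcontG : Continuous G := by
    apply Continuous.sub
    apply Continuous.sub
    · exact continuous_id.neg.mul Real.continuous_exp
    · exact Real.continuous_negMulLog.comp (Real.continuous_exp.sub continuous_const)
    · exact continuous_const
  -- facts on the interior
  have hmem : ∀ x ∈ interior D, p < Real.exp x := by
    intro x hx
    rw [hDint] at hx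
    calc p = Real.exp (Real.log p) := (Real.exp_log hp0).symm
    _ < Real.exp x := Real.exp_lt_exp.mpr hx
  -- first derivative
  set G' : ℝ → ℝ := fun x => Real.exp x * (Real.log (Real.exp x - p) - x) with hG'def
  have hderiv1 : ∀ x, p < Real.exp x → HasDerivAt G (G' x) x := by
    intro x hx
    have hpos : 0 < Real.exp x - p := by linarith
    have h1 : HasDerivAt (fun x : ℝ => -x * Real.exp x)
        (-1 * Real.exp x + -x * Real.exp x) x :=
      ((hasDerivAt_id x).neg.mul (Real.hasDerivAt_exp x))
    have h2 : HasDerivAt (fun x : ℝ => Real.negMulLog (Real.exp x - p))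
        ((-Real.log (Real.exp x - p) - 1) * Real.exp x) x := by
      have := (Real.hasDerivAt_negMulLog hpos.ne').comp x
        ((Real.hasDerivAt_exp x).sub_const p)
      exact this
    have := (h1.sub h2).sub_const ((1 - p) * Real.log (1 - p))
    refine this.congr_deriv ?_
    simp only [hG'def]
    ring
  -- second derivative
  set G'' : ℝ → ℝ := fun x => Real.exp x * (Real.log (Real.exp x - p) - x)
      + Real.exp x * (Real.exp x / (Real.exp x - p) - 1) with hG''def
  have hderiv2 : ∀ x, p < Real.exp x → HasDerivAt G' (G'' x) x := by
    intro x hx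
    have hpos : 0 < Real.exp x - p := by linarith
    have hln : HasDerivAt (fun x : ℝ => Real.log (Real.exp x - p) - x)
        ((Real.exp x - p)⁻¹ * Real.exp x - 1) x := by
      have := ((Real.hasDerivAt_log hpos.ne').comp x
        ((Real.hasDerivAt_exp x).sub_const p)).sub (hasDerivAt_id x)
      exact this
    have := (Real.hasDerivAt_exp x).mul hln
    refine this.congr_deriv ?_
    simp only [hG''def, div_eq_inv_mul]
  have hG''nonneg : ∀ x, p < Real.exp x → 0 ≤ G'' x := by
    intro x hx
    have hex : 0 < Real.exp x := Real.exp_pos x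
    have hpos : 0 < Real.exp x - p := by linarith
    have hlog : Real.log (Real.exp x / (Real.exp x - p)) ≤ Real.exp x / (Real.exp x - p) - 1 :=
      Real.log_le_sub_one_of_pos (div_pos hex hpos)
    rw [Real.log_div hex.ne' hpos.ne'] at hlog
    have hxlog : Real.log (Real.exp x) = x := Real.log_exp x
    have h := mul_nonneg hex.le (by linarith :
      (0:ℝ) ≤ (Real.log (Real.exp x - p) - x) + (Real.exp x / (Real.exp x - p) - 1))
    simpa [hG''def, mul_add] using h
  have hG'nonpos : ∀ x, p < Real.exp x → G' x ≤ 0 := by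
    intro x hx
    have hpos : 0 < Real.exp x - p := by linarith
    have : Real.log (Real.exp x - p) < Real.log (Real.exp x) :=
      Real.log_lt_log hpos (by linarith)
    rw [Real.log_exp] at this
    have := mul_nonpos_of_nonneg_of_nonpos (Real.exp_pos x).le (by linarith : Real.log (Real.exp x - p) - x ≤ 0)
    simpa [hG'def] using this
  -- G is convex on D
  have hGconv : ConvexOn ℝ D G := by
    apply convexOn_of_hasDerivWithinAt2_nonneg (convex_Ici _) hcontG.continuousOn
      (f' := G') (f'' := G'')
    · exact fun x hx => (hderiv1 x (hmem x hx)).hasDerivWithinAt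
    · exact fun x hx => (hderiv2 x (hmem x hx)).hasDerivWithinAt
    · exact fun x hx => hG''nonneg x (hmem x hx)
  -- G is antitone on D
  have hGanti : AntitoneOn G D := by
    apply antitoneOn_of_hasDerivWithinAt_nonpos (convex_Ici _) hcontG.continuousOn
      (f' := G')
    · exact fun x hx => (hderiv1 x (hmem x hx)).hasDerivWithinAt
    · exact fun x hx => hG'nonpos x (hmem x hx)
  have hG0 : G 0 = 0 := by
    simp [hGdef, Real.negMulLog]
    ring
  have h0mem : (0:ℝ) ∈ D := Set.mem_Ici.mpr (Real.log_nonpos hp0.le hp1.le)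
  -- conclude
  have := (hGconv.sup (convexOn_const (0:ℝ) (convex_Ici _)))
  apply this.congr
  intro x hx
  have hpx : p ≤ Real.exp x := by
    calc p = Real.exp (Real.log p) := (Real.exp_log hp0).symm
    _ ≤ Real.exp x := Real.exp_le_exp.mpr hx
  by_cases hx0 : x ≤ 0
  · have hGx : 0 ≤ G x := by
      have := hGanti hx h0mem hx0
      rw [hG0] at this; exact this
    have hy1 : Real.exp x ≤ 1 := Real.exp_le_one_iff.mpr hx0
    have hkey := gFun_eq_aux hp0 hp1 hpx hy1
    have hnm : Real.negMulLog (Real.exp x) = -x * Real.exp x := by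
      rw [Real.negMulLog, Real.log_exp]; ring
    show G x ⊔ (0:ℝ) = gFun p (Real.exp x)
    rw [hkey, hnm, max_eq_left hGx]
  · have hGx : G x ≤ 0 := by
      have := hGanti h0mem hx (le_of_not_ge hx0)
      rw [hG0] at this; exact this
    have hy1 : ¬ Real.exp x ≤ 1 := by
      rw [not_le] at hx0 ⊢
      exact Real.one_lt_exp_iff.mpr hx0
    show G x ⊔ (0:ℝ) = gFun p (Real.exp x)
    rw [max_eq_right hGx]
    simp [gFun, if_neg hy1, hx0]
end

section
/- Let 0 < p < 1, L a positive integer, and define g on [p, ∞) by g(y) = h(y) − (1−p)·h((y−p)/(1−p)) for p ≤ y ≤ 1 and g(y) = 0 for y > 1, where h is the binary entropy function. Then the function y ↦ g(y^{1/L}) is nonincreasing and convex on [p^L, ∞). -/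
open Real Set

/-- Simplified form of `gFun` on `[p, 1]`. -/
noncomputable def g2 (p y : ℝ) : ℝ :=
  Real.negMulLog y - Real.negMulLog (y - p) + Real.negMulLog (1 - p)

lemma qmul_negMulLog {q : ℝ} (hq : 0 < q) (a : ℝ) :
    q * Real.negMulLog (a / q) = Real.negMulLog a + a * Real.log q := by
  rcases eq_or_ne a 0 with rfl | ha
  · simp
  · rw [Real.negMulLog, Real.negMulLog, Real.log_div ha hq.ne']
    field_simp
    ring

lemma gFun_eq_g2 {p : ℝ} (hp0 : 0 < p) (hp1 : p < 1) {t : ℝ} (htp : p ≤ t) (ht1 : t ≤ 1) :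
    gFun p t = g2 p t := by
  have hq : (0 : ℝ) < 1 - p := by linarith
  rw [gFun, if_pos ht1, binEnt, binEnt]
  have h1 : 1 - (t - p) / (1 - p) = (1 - t) / (1 - p) := by
    field_simp
    ring
  rw [h1]
  have h2 : (1 - p) * (Real.negMulLog ((t - p) / (1 - p)) + Real.negMulLog ((1 - t) / (1 - p)))
      = (Real.negMulLog (t - p) + (t - p) * Real.log (1 - p))
        + (Real.negMulLog (1 - t) + (1 - t) * Real.log (1 - p)) := by
    rw [mul_add, qmul_negMulLog hq, qmul_negMulLog hq]
  rw [h2, g2]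
  have h3 : Real.negMulLog (1 - p) = -(1 - p) * Real.log (1 - p) := rfl
  rw [h3]
  ring

lemma g2_antitoneOn {p : ℝ} (hp0 : 0 < p) : AntitoneOn (g2 p) (Ici p) := by
  have hderiv : ∀ y ∈ interior (Ici p), HasDerivAt (g2 p)
      (Real.log (y - p) - Real.log y) y := by
    intro y hy
    rw [interior_Ici] at hy
    have hy' : p < y := hy
    have hy0 : y ≠ 0 := (lt_trans hp0 hy').ne'
    have hyp : y - p ≠ 0 := by
      have : 0 < y - p := by linarith
      exact this.ne'
    have h1 : HasDerivAt Real.negMulLog (-Real.log y - 1) y :=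
      Real.hasDerivAt_negMulLog hy0
    have h2 : HasDerivAt (fun z : ℝ => Real.negMulLog (z - p))
        ((-Real.log (y - p) - 1) * 1) y :=
      by have := (Real.hasDerivAt_negMulLog hyp).comp y ((hasDerivAt_id y).sub_const p); exact this
    have h3 := (h1.sub h2).add_const (Real.negMulLog (1 - p))
    have heq : -Real.log y - 1 - (-Real.log (y - p) - 1) * 1
        = Real.log (y - p) - Real.log y := by ring
    rw [heq] at h3
    exact h3
  apply antitoneOn_of_deriv_nonpos (convex_Ici p)
  · apply Continuous.continuousOn
    unfold g2
    fun_prop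
  · intro y hy
    exact (hderiv y hy).differentiableAt.differentiableWithinAt
  · intro y hy
    rw [(hderiv y hy).deriv]
    rw [interior_Ici] at hy
    have hy' : p < y := hy
    have h1 : (0:ℝ) < y - p := by linarith
    have h2 : Real.log (y - p) ≤ Real.log y :=
      Real.log_le_log h1 (by linarith)
    linarith

lemma g2_one {p : ℝ} : g2 p 1 = 0 := by
  simp [g2]

lemma gFun_max {p : ℝ} (hp0 : 0 < p) (hp1 : p < 1) {t : ℝ} (htp : p ≤ t) :
    gFun p t = max (g2 p t) 0 := by
  by_cases ht1 : t ≤ 1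
  · rw [gFun_eq_g2 hp0 hp1 htp ht1]
    have h0 : (0:ℝ) ≤ g2 p t := by
      have := g2_antitoneOn hp0 (mem_Ici.2 htp) (mem_Ici.2 hp1.le) ht1
      rw [g2_one] at this
      exact this
    exact (max_eq_left h0).symm
  · rw [gFun, if_neg ht1]
    have h0 : g2 p t ≤ 0 := by
      have := g2_antitoneOn hp0 (mem_Ici.2 hp1.le) (mem_Ici.2 (le_trans hp1.le (not_le.1 ht1).le))
        (not_le.1 ht1).le
      rw [g2_one] at this
      exact this
    exact (max_eq_right h0).symm

/-- `ψ x = g2 p (exp x)` is convex on `[log p, ∞)`. -/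
lemma psi_convexOn {p : ℝ} (hp0 : 0 < p) :
    ConvexOn ℝ (Ici (Real.log p)) (fun x => g2 p (Real.exp x)) := by
  set ψ : ℝ → ℝ := fun x => g2 p (Real.exp x) with hψ
  set D1 : ℝ → ℝ := fun x => Real.exp x * (Real.log (Real.exp x - p) - x) with hD1def
  have hint : interior (Ici (Real.log p)) = Ioi (Real.log p) := interior_Ici
  have hmem : ∀ x ∈ Ioi (Real.log p), p < Real.exp x := by
    intro x hx
    calc p = Real.exp (Real.log p) := (Real.exp_log hp0).symm
    _ < Real.exp x := Real.exp_lt_exp.2 hx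
  have hd1 : ∀ x ∈ Ioi (Real.log p), HasDerivAt ψ (D1 x) x := by
    intro x hx
    have hpx := hmem x hx
    have he0 : Real.exp x ≠ 0 := (Real.exp_pos x).ne'
    have hep : Real.exp x - p ≠ 0 := by
      have : 0 < Real.exp x - p := by linarith
      exact this.ne'
    have h1 : HasDerivAt (fun z : ℝ => Real.negMulLog (Real.exp z))
        ((-Real.log (Real.exp x) - 1) * Real.exp x) x :=
      (Real.hasDerivAt_negMulLog he0).comp x (Real.hasDerivAt_exp x)
    have h2 : HasDerivAt (fun z : ℝ => Real.negMulLog (Real.exp z - p))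
        ((-Real.log (Real.exp x - p) - 1) * Real.exp x) x :=
      by have := (Real.hasDerivAt_negMulLog hep).comp x ((Real.hasDerivAt_exp x).sub_const p); exact this
    have h3 := (h1.sub h2).add_const (Real.negMulLog (1 - p))
    have heq : (-Real.log (Real.exp x) - 1) * Real.exp x
        - (-Real.log (Real.exp x - p) - 1) * Real.exp x = D1 x := by
      rw [hD1def, Real.log_exp]
      ring
    rw [heq] at h3
    exact h3
  have hd2 : ∀ x ∈ Ioi (Real.log p), HasDerivAt D1
      (Real.exp x * (Real.log (Real.exp x - p) - x)
        + Real.exp x * (Real.exp x / (Real.exp x - p) - 1)) x := by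
    intro x hx
    have hpx := hmem x hx
    have hep : Real.exp x - p ≠ 0 := by
      have : 0 < Real.exp x - p := by linarith
      exact this.ne'
    have hlog : HasDerivAt (fun z : ℝ => Real.log (Real.exp z - p))
        (Real.exp x / (Real.exp x - p)) x :=
      ((Real.hasDerivAt_exp x).sub_const p).log hep
    have hin : HasDerivAt (fun z : ℝ => Real.log (Real.exp z - p) - z)
        (Real.exp x / (Real.exp x - p) - 1) x := hlog.sub (hasDerivAt_id x)
    exact (Real.hasDerivAt_exp x).mul hin
  have hderiv_eq : ∀ x ∈ Ioi (Real.log p), deriv ψ x = D1 x := fun x hx => (hd1 x hx).deriv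
  have hev : ∀ x ∈ Ioi (Real.log p), deriv ψ =ᶠ[nhds x] D1 := by
    intro x hx
    exact Filter.eventuallyEq_of_mem (Ioi_mem_nhds hx) hderiv_eq
  apply convexOn_of_deriv2_nonneg (convex_Ici _)
  · apply Continuous.continuousOn
    unfold ψ
    unfold g2
    fun_prop
  · rw [hint]
    intro x hx
    exact (hd1 x hx).differentiableAt.differentiableWithinAt
  · rw [hint]
    intro x hx
    exact (((hd2 x hx).differentiableAt).congr_of_eventuallyEq
      (hev x hx)).differentiableWithinAt
  · rw [hint]
    intro x hx
    have h2 : deriv (deriv ψ) x = Real.exp x * (Real.log (Real.exp x - p) - x)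
        + Real.exp x * (Real.exp x / (Real.exp x - p) - 1) := by
      rw [(hev x hx).deriv_eq]
      exact (hd2 x hx).deriv
    have hit : deriv^[2] ψ x = deriv (deriv ψ) x := by
      simp [Function.iterate_succ, Function.iterate_one]
    rw [hit, h2]
    -- nonnegativity
    have hpx := hmem x hx
    set t := Real.exp x with htdef
    have ht0 : 0 < t := Real.exp_pos x
    have htp : 0 < t - p := by linarith
    have hxlog : x = Real.log t := (Real.log_exp x).symm
    have hlog1 : Real.log (t / (t - p)) ≤ t / (t - p) - 1 :=
      Real.log_le_sub_one_of_pos (by positivity)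
    have hlog2 : Real.log (t / (t - p)) = Real.log t - Real.log (t - p) :=
      Real.log_div ht0.ne' htp.ne'
    have hfrac : t / (t - p) - 1 = t / (t - p) - 1 := rfl
    have key : 0 ≤ Real.log (t - p) - x + (t / (t - p) - 1) := by
      rw [hxlog]
      rw [hlog2] at hlog1
      linarith
    have : 0 ≤ t * ((Real.log (t - p) - x) + (t / (t - p) - 1)) :=
      mul_nonneg ht0.le key
    calc (0:ℝ) ≤ t * ((Real.log (t - p) - x) + (t / (t - p) - 1)) := this
    _ = t * (Real.log (t - p) - x) + t * (t / (t - p) - 1) := by ring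

lemma psi_antitoneOn {p : ℝ} (hp0 : 0 < p) :
    AntitoneOn (fun x => g2 p (Real.exp x)) (Ici (Real.log p)) := by
  intro x hx y hy hxy
  have h1 : p ≤ Real.exp x := by
    calc p = Real.exp (Real.log p) := (Real.exp_log hp0).symm
    _ ≤ Real.exp x := Real.exp_le_exp.2 hx
  have h2 : p ≤ Real.exp y := by
    calc p = Real.exp (Real.log p) := (Real.exp_log hp0).symm
    _ ≤ Real.exp y := Real.exp_le_exp.2 hy
  exact g2_antitoneOn hp0 (mem_Ici.2 h1) (mem_Ici.2 h2) (Real.exp_le_exp.2 hxy)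

theorem stmt_5 (p : ℝ) (hp0 : 0 < p) (hp1 : p < 1) (L : ℕ) (hL : 0 < L) :
    AntitoneOn (fun y : ℝ => gFun p (y ^ (1 / (L : ℝ)))) (Set.Ici (p ^ L)) ∧
    ConvexOn ℝ (Set.Ici (p ^ L)) (fun y : ℝ => gFun p (y ^ (1 / (L : ℝ)))) := by
  have hLne : (L : ℝ) ≠ 0 := Nat.cast_ne_zero.2 hL.ne'
  have hLpos : (0:ℝ) < (L:ℝ) := Nat.cast_pos.2 hL
  have hpL : (0:ℝ) < p ^ L := pow_pos hp0 L
  have hpLrpow : (p ^ L : ℝ) ^ (1 / (L:ℝ)) = p := by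
    rw [← Real.rpow_natCast p L, ← Real.rpow_mul hp0.le]
    rw [mul_one_div, div_self hLne, Real.rpow_one]
  -- for y ≥ p^L, y^(1/L) ≥ p
  have hrpow_ge : ∀ y : ℝ, p ^ L ≤ y → p ≤ y ^ (1 / (L:ℝ)) := by
    intro y hy
    calc p = (p ^ L : ℝ) ^ (1 / (L:ℝ)) := hpLrpow.symm
    _ ≤ y ^ (1 / (L:ℝ)) := Real.rpow_le_rpow hpL.le hy (by positivity)
  have hrpow_pos : ∀ y : ℝ, p ^ L ≤ y → 0 < y := fun y hy => lt_of_lt_of_le hpL hy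
  -- rpow as exp of scaled log
  have hrpow_exp : ∀ y : ℝ, p ^ L ≤ y →
      y ^ (1 / (L:ℝ)) = Real.exp ((1 / (L:ℝ)) * Real.log y) := by
    intro y hy
    rw [Real.rpow_def_of_pos (hrpow_pos y hy), mul_comm]
  -- pointwise description of the target function
  have hFeq : ∀ y ∈ Set.Ici (p ^ L),
      gFun p (y ^ (1 / (L:ℝ)))
        = max (g2 p (Real.exp ((1 / (L:ℝ)) * Real.log y))) 0 := by
    intro y hy
    rw [Set.mem_Ici] at hy
    rw [← hrpow_exp y hy]
    exact gFun_max hp0 hp1 (hrpow_ge y hy)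
  constructor
  · -- Antitone
    intro a ha b hb hab
    rw [Set.mem_Ici] at ha hb
    simp only []
    rw [hFeq a (Set.mem_Ici.2 ha), hFeq b (Set.mem_Ici.2 hb)]
    apply max_le_max _ le_rfl
    rw [← hrpow_exp a ha, ← hrpow_exp b hb]
    apply g2_antitoneOn hp0 (Set.mem_Ici.2 (hrpow_ge a ha)) (Set.mem_Ici.2 (hrpow_ge b hb))
    exact Real.rpow_le_rpow (hrpow_pos a ha).le hab (by positivity)
  · -- Convex
    set f : ℝ → ℝ := fun y => (1 / (L:ℝ)) * Real.log y with hfdef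
    have himg : f '' Set.Ici (p ^ L) = Set.Ici (Real.log p) := by
      apply Set.Subset.antisymm
      · rintro _ ⟨y, hy, rfl⟩
        rw [Set.mem_Ici] at hy ⊢
        have h1 : Real.log (p ^ L) ≤ Real.log y := Real.log_le_log hpL hy
        rw [Real.log_pow] at h1
        show Real.log p ≤ (1 / (L:ℝ)) * Real.log y
        calc Real.log p = (1 / (L:ℝ)) * ((L:ℝ) * Real.log p) := by
              field_simp
        _ ≤ (1 / (L:ℝ)) * Real.log y :=
              mul_le_mul_of_nonneg_left h1 (by positivity)
      · rintro z hz
        rw [Set.mem_Ici] at hz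
        refine ⟨Real.exp ((L:ℝ) * z), ?_, ?_⟩
        · rw [Set.mem_Ici]
          calc (p:ℝ) ^ L = Real.exp ((L:ℝ) * Real.log p) := by
                rw [← Real.log_pow, Real.exp_log hpL]
          _ ≤ Real.exp ((L:ℝ) * z) :=
                Real.exp_le_exp.2 (mul_le_mul_of_nonneg_left hz hLpos.le)
        · show (1 / (L:ℝ)) * Real.log (Real.exp ((L:ℝ) * z)) = z
          rw [Real.log_exp]
          field_simp
    have hψconv : ConvexOn ℝ (f '' Set.Ici (p ^ L)) (fun x => g2 p (Real.exp x)) := by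
      rw [himg]; exact psi_convexOn hp0
    have hψanti : AntitoneOn (fun x => g2 p (Real.exp x)) (f '' Set.Ici (p ^ L)) := by
      rw [himg]; exact psi_antitoneOn hp0
    have hfconc : ConcaveOn ℝ (Set.Ici (p ^ L)) f := by
      have hlog : ConcaveOn ℝ (Set.Ici (p ^ L)) Real.log :=
        (strictConcaveOn_log_Ioi.concaveOn).subset
          (fun y hy => lt_of_lt_of_le hpL hy) (convex_Ici _)
      have := hlog.smul (c := 1 / (L:ℝ)) (by positivity)
      simpa [hfdef, smul_eq_mul] using this
    have hGconv : ConvexOn ℝ (Set.Ici (p ^ L)) ((fun x => g2 p (Real.exp x)) ∘ f) :=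
      hψconv.comp_concaveOn hfconc hψanti
    have hMconv : ConvexOn ℝ (Set.Ici (p ^ L))
        (((fun x => g2 p (Real.exp x)) ∘ f) ⊔ 0) :=
      hGconv.sup (convexOn_const 0 (convex_Ici _))
    refine ⟨convex_Ici _, ?_⟩
    intro x hx y hy a b ha hb hab
    have hxy : a • x + b • y ∈ Set.Ici (p ^ L) := (convex_Ici _) hx hy ha hb hab
    beta_reduce
    rw [hFeq _ hx, hFeq _ hy, hFeq _ hxy]
    have := hMconv.2 hx hy ha hb hab
    simpa [Pi.sup_apply, hfdef] using this
end

section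
/- Let 0 < p < 1, L a positive integer, p^L ≤ D, and g as defined. Then the infimum of (1/L)·∑_{ℓ=1}^L (1/2)·[g(e^{Δ_{ℓ,+}}) + g(e^{Δ_{ℓ,−}})] over all Δ_{ℓ,+}, Δ_{ℓ,−} ∈ [log p, 0] satisfying (1/2)·exp(∑_ℓ Δ_{ℓ,+}) + (1/2)·exp(∑_ℓ Δ_{ℓ,−}) ≤ D is at least g(D^{1/L}). -/
/-- Closed form of `gFun` on `[p, 1]`. -/
lemma gFun_eq_closed {p y : ℝ} (hp0 : 0 < p) (hp1 : p < 1) (hpy : p ≤ y) (hy1 : y ≤ 1) :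
    gFun p y = (y - p) * Real.log (y - p) - y * Real.log y - (1 - p) * Real.log (1 - p) := by
  have hq : (0:ℝ) < 1 - p := by linarith
  have hq' : (1 - p) ≠ 0 := ne_of_gt hq
  have h1 : 1 - (y - p) / (1 - p) = (1 - y) / (1 - p) := by field_simp; ring
  have h2 : (1 - p) * ((y - p) / (1 - p) * Real.log ((y - p) / (1 - p)))
      = (y - p) * Real.log (y - p) - (y - p) * Real.log (1 - p) := by
    have e1 : (1 - p) * ((y - p) / (1 - p) * Real.log ((y - p) / (1 - p)))
        = (y - p) * Real.log ((y - p) / (1 - p)) := by field_simp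
    rcases eq_or_lt_of_le (sub_nonneg.mpr hpy) with h | h
    · rw [e1, ← h]; simp
    · rw [e1, Real.log_div (ne_of_gt h) hq']; ring
  have h3 : (1 - p) * ((1 - y) / (1 - p) * Real.log ((1 - y) / (1 - p)))
      = (1 - y) * Real.log (1 - y) - (1 - y) * Real.log (1 - p) := by
    have e1 : (1 - p) * ((1 - y) / (1 - p) * Real.log ((1 - y) / (1 - p)))
        = (1 - y) * Real.log ((1 - y) / (1 - p)) := by field_simp
    rcases eq_or_lt_of_le (sub_nonneg.mpr hy1) with h | h
    · rw [e1, ← h]; simp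
    · rw [e1, Real.log_div (ne_of_gt h) hq']; ring
  simp only [gFun, binEnt, Real.negMulLog, if_pos hy1, h1]
  nlinarith [h2, h3]



noncomputable def F0 (p x : ℝ) : ℝ :=
  (Real.exp x - p) * Real.log (Real.exp x - p) - x * Real.exp x - (1 - p) * Real.log (1 - p)

noncomputable def F1 (p x : ℝ) : ℝ := Real.exp x * (Real.log (Real.exp x - p) - x)

lemma hasDerivAt_F0 {p x : ℝ} (h : p < Real.exp x) : HasDerivAt (F0 p) (F1 p x) x := by
  have hne : Real.exp x - p ≠ 0 := ne_of_gt (sub_pos.2 h)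
  have h1 : HasDerivAt (fun x => Real.exp x - p) (Real.exp x) x :=
    (Real.hasDerivAt_exp x).sub_const p
  have h2 : HasDerivAt (fun t : ℝ => t * Real.log t)
      (Real.log (Real.exp x - p) + 1) (Real.exp x - p) := Real.hasDerivAt_mul_log hne
  have h3 := h2.comp x h1
  have h4 : HasDerivAt (fun x : ℝ => x * Real.exp x) (1 * Real.exp x + x * Real.exp x) x :=
    (hasDerivAt_id x).mul (Real.hasDerivAt_exp x)
  have h5 := (h3.sub h4).sub_const ((1 - p) * Real.log (1 - p))
  refine HasDerivAt.congr_deriv h5 ?_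
  simp [F1, Function.comp]
  ring

lemma hasDerivAt_F1 {p x : ℝ} (h : p < Real.exp x) :
    HasDerivAt (F1 p)
      (F1 p x + Real.exp x * (Real.exp x / (Real.exp x - p) - 1)) x := by
  have hne : Real.exp x - p ≠ 0 := ne_of_gt (sub_pos.2 h)
  have h1 : HasDerivAt (fun x => Real.exp x - p) (Real.exp x) x :=
    (Real.hasDerivAt_exp x).sub_const p
  have hlog : HasDerivAt (fun x => Real.log (Real.exp x - p))
      (Real.exp x / (Real.exp x - p)) x := h1.log hne
  have hin : HasDerivAt (fun x => Real.log (Real.exp x - p) - x)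
      (Real.exp x / (Real.exp x - p) - 1) x := hlog.sub (hasDerivAt_id x)
  have := (Real.hasDerivAt_exp x).mul hin
  exact this

lemma continuous_F0 (p : ℝ) : Continuous (F0 p) := by
  have h1 : Continuous fun x => (Real.exp x - p) * Real.log (Real.exp x - p) :=
    Real.continuous_mul_log.comp (Real.continuous_exp.sub continuous_const)
  exact (h1.sub (continuous_id.mul Real.continuous_exp)).sub continuous_const

lemma exp_gt_of_mem {p x : ℝ} (hp0 : 0 < p) (hx : x ∈ Set.Ioo (Real.log p) 0) :
    p < Real.exp x := by
  have := Real.exp_lt_exp.2 hx.1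
  rwa [Real.exp_log hp0] at this

lemma convexOn_F0 {p : ℝ} (hp0 : 0 < p) (hp1 : p < 1) :
    ConvexOn ℝ (Set.Icc (Real.log p) 0) (F0 p) := by
  have hint : interior (Set.Icc (Real.log p) 0) = Set.Ioo (Real.log p) 0 := interior_Icc
  refine convexOn_of_hasDerivWithinAt2_nonneg (convex_Icc _ _)
    (continuous_F0 p).continuousOn (f' := F1 p)
    (f'' := fun x => F1 p x + Real.exp x * (Real.exp x / (Real.exp x - p) - 1)) ?_ ?_ ?_
  · intro x hx
    rw [hint] at hx
    exact (hasDerivAt_F0 (exp_gt_of_mem hp0 hx)).hasDerivWithinAt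
  · intro x hx
    rw [hint] at hx
    exact (hasDerivAt_F1 (exp_gt_of_mem hp0 hx)).hasDerivWithinAt
  · intro x hx
    rw [hint] at hx
    have hpy := exp_gt_of_mem hp0 hx
    set y := Real.exp x with hy
    have hy0 : 0 < y := Real.exp_pos x
    have hyp : 0 < y - p := sub_pos.2 hpy
    have hlog : Real.log (y / (y - p)) ≤ y / (y - p) - 1 :=
      Real.log_le_sub_one_of_pos (by positivity)
    rw [Real.log_div (ne_of_gt hy0) (ne_of_gt hyp)] at hlog
    have hxlog : x = Real.log y := (Real.log_exp x).symm
    have key : 0 ≤ Real.log (y - p) - x + (y / (y - p) - 1) := by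
      rw [hxlog]; linarith
    have : F1 p x + Real.exp x * (Real.exp x / (Real.exp x - p) - 1)
        = y * (Real.log (y - p) - x + (y / (y - p) - 1)) := by
      simp only [F1, ← hy]; ring
    show 0 ≤ F1 p x + Real.exp x * (Real.exp x / (Real.exp x - p) - 1)
    rw [this]
    exact mul_nonneg (le_of_lt hy0) key

lemma antitoneOn_F0 {p : ℝ} (hp0 : 0 < p) (hp1 : p < 1) :
    AntitoneOn (F0 p) (Set.Icc (Real.log p) 0) := by
  have hint : interior (Set.Icc (Real.log p) 0) = Set.Ioo (Real.log p) 0 := interior_Icc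
  refine antitoneOn_of_hasDerivWithinAt_nonpos (convex_Icc _ _)
    (continuous_F0 p).continuousOn (f' := F1 p) ?_ ?_
  · intro x hx
    rw [hint] at hx
    exact (hasDerivAt_F0 (exp_gt_of_mem hp0 hx)).hasDerivWithinAt
  · intro x hx
    rw [hint] at hx
    have hpy := exp_gt_of_mem hp0 hx
    have hy0 : 0 < Real.exp x := Real.exp_pos x
    have : Real.log (Real.exp x - p) < Real.log (Real.exp x) :=
      Real.log_lt_log (sub_pos.2 hpy) (by linarith)
    rw [Real.log_exp] at this
    have : Real.log (Real.exp x - p) - x ≤ 0 := by linarith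
    exact mul_nonpos_of_nonneg_of_nonpos (le_of_lt hy0) this

lemma gFun_exp_eq_F0 {p x : ℝ} (hp0 : 0 < p) (hp1 : p < 1)
    (hx : x ∈ Set.Icc (Real.log p) 0) : gFun p (Real.exp x) = F0 p x := by
  have h1 : p ≤ Real.exp x := by
    rw [← Real.exp_log hp0]; exact Real.exp_le_exp.2 hx.1
  have h2 : Real.exp x ≤ 1 := by
    rw [← Real.exp_zero]; exact Real.exp_le_exp.2 hx.2
  rw [gFun_eq_closed hp0 hp1 h1 h2]
  simp only [F0, Real.log_exp]
  ring

theorem stmt_6 (p : ℝ) (hp0 : 0 < p) (hp1 : p < 1) (L : ℕ) (hL : 0 < L)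
    (D : ℝ) (hD : p ^ L ≤ D) :
    ∀ Δp Δm : Fin L → ℝ,
      (∀ ℓ, Δp ℓ ∈ Set.Icc (Real.log p) 0) →
      (∀ ℓ, Δm ℓ ∈ Set.Icc (Real.log p) 0) →
      (1 / 2) * Real.exp (∑ ℓ, Δp ℓ) + (1 / 2) * Real.exp (∑ ℓ, Δm ℓ) ≤ D →
      gFun p (D ^ (1 / (L : ℝ))) ≤
        (1 / (L : ℝ)) * ∑ ℓ, (1 / 2) * (gFun p (Real.exp (Δp ℓ)) + gFun p (Real.exp (Δm ℓ))) := by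
  intro Δp Δm hΔp hΔm hcon
  have hLpos : (0:ℝ) < (L:ℝ) := Nat.cast_pos.2 hL
  have hLne : (L:ℝ) ≠ 0 := ne_of_gt hLpos
  have hlp : Real.log p < 0 := Real.log_neg hp0 hp1
  have hDpos : 0 < D := lt_of_lt_of_le (pow_pos hp0 L) hD
  set s := Set.Icc (Real.log p) 0 with hs
  have hconv := convexOn_F0 hp0 hp1
  have hanti := antitoneOn_F0 hp0 hp1
  -- averages
  set a := (L:ℝ)⁻¹ * ∑ ℓ, Δp ℓ with ha
  set b := (L:ℝ)⁻¹ * ∑ ℓ, Δm ℓ with hb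
  have avg_mem : ∀ (f : Fin L → ℝ), (∀ ℓ, f ℓ ∈ s) → (L:ℝ)⁻¹ * ∑ ℓ, f ℓ ∈ s := by
    intro f hf
    have h1 : (L:ℝ) * Real.log p ≤ ∑ ℓ, f ℓ := by
      calc (L:ℝ) * Real.log p = ∑ _ℓ : Fin L, Real.log p := by
            simp [Finset.sum_const, mul_comm]
        _ ≤ ∑ ℓ, f ℓ := Finset.sum_le_sum fun i _ => (hf i).1
    have h2 : ∑ ℓ, f ℓ ≤ 0 := Finset.sum_nonpos fun i _ => (hf i).2
    constructor
    · rw [← mul_le_mul_iff_right₀ hLpos]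
      calc (L:ℝ) * Real.log p ≤ ∑ ℓ, f ℓ := h1
        _ = (L:ℝ) * ((L:ℝ)⁻¹ * ∑ ℓ, f ℓ) := by field_simp
    · exact mul_nonpos_of_nonneg_of_nonpos (le_of_lt (by positivity)) h2
  have haS : a ∈ s := avg_mem Δp hΔp
  have hbS : b ∈ s := avg_mem Δm hΔm
  -- Jensen
  have jensen : ∀ (f : Fin L → ℝ), (∀ ℓ, f ℓ ∈ s) →
      F0 p ((L:ℝ)⁻¹ * ∑ ℓ, f ℓ) ≤ (L:ℝ)⁻¹ * ∑ ℓ, F0 p (f ℓ) := by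
    intro f hf
    have hw1 : ∑ _ℓ : Fin L, (L:ℝ)⁻¹ = 1 := by
      simp [Finset.sum_const]
      field_simp
    have := hconv.map_sum_le (t := Finset.univ) (w := fun _ => (L:ℝ)⁻¹) (p := f)
      (fun i _ => by positivity) hw1 (fun i _ => hf i)
    simpa [smul_eq_mul, ← Finset.mul_sum] using this
  have hJa := jensen Δp hΔp
  have hJb := jensen Δm hΔm
  -- Midpoint
  set m := (a + b) / 2 with hm
  have hmS : m ∈ s := ⟨by rw [hm]; cases haS; cases hbS; dsimp at *; linarith,
    by rw [hm]; cases haS; cases hbS; dsimp at *; linarith⟩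
  have hmid : F0 p m ≤ (1/2) * F0 p a + (1/2) * F0 p b := by
    have h2 := hconv.2 haS hbS (by norm_num : (0:ℝ) ≤ 1/2) (by norm_num : (0:ℝ) ≤ 1/2)
      (by norm_num : (1:ℝ)/2 + 1/2 = 1)
    simp only [smul_eq_mul] at h2
    have hh : (1:ℝ)/2 * a + 1/2 * b = m := by rw [hm]; ring
    rw [hh] at h2
    linarith [h2]
  -- AM-GM and constraint: exp (L*m) ≤ D
  have hLa : (L:ℝ) * a = ∑ ℓ, Δp ℓ := by rw [ha]; field_simp
  have hLb : (L:ℝ) * b = ∑ ℓ, Δm ℓ := by rw [hb]; field_simp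
  have hexp_m : Real.exp ((L:ℝ) * m) ≤ D := by
    have e1 : Real.exp ((L:ℝ) * m) = Real.exp ((L:ℝ)*a/2) * Real.exp ((L:ℝ)*b/2) := by
      rw [← Real.exp_add]; congr 1; rw [hm]; ring
    have e2 : Real.exp ((L:ℝ)*a/2) * Real.exp ((L:ℝ)*a/2) = Real.exp ((L:ℝ)*a) := by
      rw [← Real.exp_add]; congr 1; ring
    have e3 : Real.exp ((L:ℝ)*b/2) * Real.exp ((L:ℝ)*b/2) = Real.exp ((L:ℝ)*b) := by
      rw [← Real.exp_add]; congr 1; ring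
    have hsq := sq_nonneg (Real.exp ((L:ℝ)*a/2) - Real.exp ((L:ℝ)*b/2))
    rw [← hLa, ← hLb] at hcon
    nlinarith [hcon, e1, e2, e3, hsq]
  have hmc : m ≤ Real.log D / (L:ℝ) := by
    have := (Real.le_log_iff_exp_le hDpos).2 hexp_m
    rw [le_div_iff₀ hLpos]; linarith [this]
  -- conclusion about gFun p (D^(1/L))
  set c := Real.log D / (L:ℝ) with hc
  have hkey : gFun p (D ^ (1 / (L:ℝ))) ≤ F0 p m := by
    by_cases hc0 : c ≤ 0
    · have hcp : Real.log p ≤ c := by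
        have h1 : Real.log (p ^ L) ≤ Real.log D := Real.log_le_log (pow_pos hp0 L) hD
        rw [Real.log_pow] at h1
        rw [hc, le_div_iff₀ hLpos]
        calc Real.log p * (L:ℝ) = (L:ℝ) * Real.log p := by ring
          _ ≤ Real.log D := by exact_mod_cast h1
      have hcS : c ∈ s := ⟨hcp, hc0⟩
      have hde : D ^ (1 / (L:ℝ)) = Real.exp c := by
        rw [Real.rpow_def_of_pos hDpos, hc]; congr 1; ring
      rw [hde, gFun_exp_eq_F0 hp0 hp1 hcS]
      exact hanti hmS hcS hmc
    · push_neg at hc0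
      have hD1 : 1 < D := by
        have : 0 < Real.log D := by
          rw [hc] at hc0
          have := (div_pos_iff).1 hc0
          rcases this with ⟨h, _⟩ | ⟨_, h⟩
          · exact h
          · linarith
        linarith [Real.exp_log hDpos, Real.add_one_le_exp (Real.log D)]
      have hgt1 : 1 < D ^ (1 / (L:ℝ)) :=
        Real.one_lt_rpow_iff_of_pos hDpos |>.2 (Or.inl ⟨hD1, by positivity⟩)
      have h0 : gFun p (D ^ (1 / (L:ℝ))) = 0 := by
        rw [gFun, if_neg (not_le.2 hgt1)]
      rw [h0]
      have hF00 : F0 p 0 = 0 := by simp [F0]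
      have h0S : (0:ℝ) ∈ s := ⟨le_of_lt hlp, le_refl 0⟩
      have := hanti hmS h0S hmS.2
      linarith [hF00 ▸ this]
  -- final chain
  have hsum : (1 / (L:ℝ)) * ∑ ℓ, (1/2) * (gFun p (Real.exp (Δp ℓ)) + gFun p (Real.exp (Δm ℓ)))
      = (1/2) * ((L:ℝ)⁻¹ * ∑ ℓ, F0 p (Δp ℓ)) + (1/2) * ((L:ℝ)⁻¹ * ∑ ℓ, F0 p (Δm ℓ)) := by
    have : ∀ ℓ : Fin L, (1/2 : ℝ) * (gFun p (Real.exp (Δp ℓ)) + gFun p (Real.exp (Δm ℓ)))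
        = (1/2) * F0 p (Δp ℓ) + (1/2) * F0 p (Δm ℓ) := by
      intro ℓ
      rw [gFun_exp_eq_F0 hp0 hp1 (hΔp ℓ), gFun_exp_eq_F0 hp0 hp1 (hΔm ℓ)]
      ring
    rw [Finset.sum_congr rfl (fun ℓ _ => this ℓ), Finset.sum_add_distrib,
      ← Finset.mul_sum, ← Finset.mul_sum, one_div]
    ring
  rw [hsum]
  linarith [hkey, hmid, hJa, hJb]
end

section
/- Let Y₁₁, Y₁₂, Y₂₁, Y₂₂ be i.i.d. uniform on {0,1}, let W be uniform on {1,2} independent of them, and set U₁ = Y_{1W}, U₂ = Y_{2W}. Then I(Y₁,Y₂; U₁, U₂) = (5/4)·log 2 and I(Y₁,Y₂; U₁) = (1/2)·log 2, where Y₁ = (Y₁₁,Y₁₂) and Y₂ = (Y₂₁,Y₂₂). -/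
open Finset

/-- Shannon entropy (natural log) of a random variable `X` on a finite
probability space with weights `μ`. -/
noncomputable def ent {Ω α : Type*} [Fintype Ω] [Fintype α] [DecidableEq α]
    (μ : Ω → ℝ) (X : Ω → α) : ℝ :=
  ∑ a : α, Real.negMulLog (∑ ω ∈ univ.filter (fun ω => X ω = a), μ ω)

/-- Mutual information `I(X;Y)` on a finite probability space. -/
noncomputable def mutualInfo {Ω α β : Type*} [Fintype Ω] [Fintype α] [Fintype β]
    [DecidableEq α] [DecidableEq β] (μ : Ω → ℝ) (X : Ω → α) (Y : Ω → β) : ℝ :=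
  ent μ X + ent μ Y - ent μ (fun ω => (X ω, Y ω))

/-- Sample space for the toy example: `(Y₁₁, Y₁₂, Y₂₁, Y₂₂, W)`, all uniform. -/
abbrev ToyΩ : Type := Fin 2 × Fin 2 × Fin 2 × Fin 2 × Fin 2

/-- Uniform measure on the 32-point space. -/
noncomputable def toyμ : ToyΩ → ℝ := fun _ => 1 / 32

def toyY1 (ω : ToyΩ) : Fin 2 × Fin 2 := (ω.1, ω.2.1)
def toyY2 (ω : ToyΩ) : Fin 2 × Fin 2 := (ω.2.2.1, ω.2.2.2.1)
def toyW (ω : ToyΩ) : Fin 2 := ω.2.2.2.2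
/-- `U₁ = Y_{1W}`: the `W`-th coordinate of `Y₁`. -/
def toyU1 (ω : ToyΩ) : Fin 2 := if toyW ω = 0 then (toyY1 ω).1 else (toyY1 ω).2
/-- `U₂ = Y_{2W}`: the `W`-th coordinate of `Y₂`. -/
def toyU2 (ω : ToyΩ) : Fin 2 := if toyW ω = 0 then (toyY2 ω).1 else (toyY2 ω).2

private lemma hlog2 : Real.log (1/2:ℝ) = -(1*Real.log 2) := by
  rw [show (1/2:ℝ) = (2:ℝ)^(-1:ℤ) by norm_num, Real.log_zpow]; push_cast; ring
private lemma hlog4 : Real.log (1/4:ℝ) = -(2*Real.log 2) := by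
  rw [show (1/4:ℝ) = (2:ℝ)^(-2:ℤ) by norm_num, Real.log_zpow]; push_cast; ring
private lemma hlog8 : Real.log (1/8:ℝ) = -(3*Real.log 2) := by
  rw [show (1/8:ℝ) = (2:ℝ)^(-3:ℤ) by norm_num, Real.log_zpow]; push_cast; ring
private lemma hlog16 : Real.log (1/16:ℝ) = -(4*Real.log 2) := by
  rw [show (1/16:ℝ) = (2:ℝ)^(-4:ℤ) by norm_num, Real.log_zpow]; push_cast; ring
private lemma hlog32 : Real.log (1/32:ℝ) = -(5*Real.log 2) := by
  rw [show (1/32:ℝ) = (2:ℝ)^(-5:ℤ) by norm_num, Real.log_zpow]; push_cast; ring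

set_option maxHeartbeats 4000000 in
private lemma entY : ent toyμ (fun ω => (toyY1 ω, toyY2 ω)) = 4 * Real.log 2 := by
  simp only [ent, toyμ, Finset.sum_filter, Fintype.sum_prod_type, Fin.sum_univ_two,
    Prod.mk.injEq]
  norm_num [toyY1, toyY2, Real.negMulLog]
  try simp +decide only []
  norm_num [hlog2, hlog4, hlog8, hlog16, hlog32]
  try ring

set_option maxHeartbeats 4000000 in
private lemma entU : ent toyμ (fun ω => (toyU1 ω, toyU2 ω)) = 2 * Real.log 2 := by
  simp only [ent, toyμ, Finset.sum_filter, Fintype.sum_prod_type, Fin.sum_univ_two,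
    Prod.mk.injEq]
  norm_num [toyU1, toyU2, toyW, toyY1, toyY2, Real.negMulLog]
  try simp +decide only []
  norm_num [hlog2, hlog4, hlog8, hlog16, hlog32]
  try ring

set_option maxHeartbeats 4000000 in
private lemma entYU :
    ent toyμ (fun ω => ((toyY1 ω, toyY2 ω), (toyU1 ω, toyU2 ω))) = 19/4 * Real.log 2 := by
  simp only [ent, toyμ, Finset.sum_filter, Fintype.sum_prod_type, Fin.sum_univ_two,
    Prod.mk.injEq]
  norm_num [toyU1, toyU2, toyW, toyY1, toyY2, Real.negMulLog]
  try simp +decide only []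
  norm_num [hlog2, hlog4, hlog8, hlog16, hlog32]
  try ring

set_option maxHeartbeats 4000000 in
private lemma entU1 : ent toyμ toyU1 = Real.log 2 := by
  simp only [ent, toyμ, Finset.sum_filter, Fintype.sum_prod_type, Fin.sum_univ_two,
    Prod.mk.injEq]
  norm_num [toyU1, toyW, toyY1, Real.negMulLog]
  try simp +decide only []
  norm_num [hlog2, hlog4, hlog8, hlog16, hlog32]
  try ring

set_option maxHeartbeats 4000000 in
private lemma entYU1 :
    ent toyμ (fun ω => ((toyY1 ω, toyY2 ω), toyU1 ω)) = 9/2 * Real.log 2 := by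
  simp only [ent, toyμ, Finset.sum_filter, Fintype.sum_prod_type, Fin.sum_univ_two,
    Prod.mk.injEq]
  norm_num [toyU1, toyW, toyY1, toyY2, Real.negMulLog]
  try simp +decide only []
  norm_num [hlog2, hlog4, hlog8, hlog16, hlog32]
  try ring

theorem stmt_10 :
    mutualInfo toyμ (fun ω => (toyY1 ω, toyY2 ω)) (fun ω => (toyU1 ω, toyU2 ω)) =
      (5 / 4) * Real.log 2 ∧
    mutualInfo toyμ (fun ω => (toyY1 ω, toyY2 ω)) toyU1 = (1 / 2) * Real.log 2 := by
  constructor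
  · rw [mutualInfo, entY, entU, entYU]; ring
  · rw [mutualInfo, entY, entU1, entYU1]; ring
end

section
/- Let σ² > 0, σ_W² ≥ 0. For jointly Gaussian Y₀ ~ N(0,1), independent N₁, N₂, V₁, V₂ ~ N(0,1) and W ~ N(0,σ_W²), all mutually independent, set Y_ℓ = Y₀ + N_ℓ, U₁ = Y₁ + V₁ + W, U₂ = Y₂ + V₂ − W. Then (treating differential-entropy computations as determinant identities) the covariance-based mutual information satisfies I(Y₁,Y₂; U₁,U₂) = (3/2)·log 2 + (1/2)·log((1+σ_W²)/(1+2σ_W²)). -/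
open Matrix

theorem stmt_15 (w : ℝ) (hw : 0 ≤ w) :
    -- covariance matrix of (Y₁, Y₂) with Y₀ ~ N(0,1), Yₗ = Y₀ + Nₗ
    let covY : Matrix (Fin 2) (Fin 2) ℝ := !![2, 1; 1, 2]
    -- covariance matrix of (U₁, U₂) with U₁ = Y₁ + V₁ + W, U₂ = Y₂ + V₂ − W, Var W = w
    let covU : Matrix (Fin 2) (Fin 2) ℝ := !![3 + w, 1 - w; 1 - w, 3 + w]
    -- covariance matrix of (Y₁, Y₂, U₁, U₂)
    let covFull : Matrix (Fin 4) (Fin 4) ℝ :=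
      !![2, 1, 2, 1;
         1, 2, 1, 2;
         2, 1, 3 + w, 1 - w;
         1, 2, 1 - w, 3 + w]
    -- Gaussian mutual information I(Y₁,Y₂; U₁,U₂) via the determinant formula
    (1 / 2) * Real.log (covY.det * covU.det / covFull.det) =
      (3 / 2) * Real.log 2 + (1 / 2) * Real.log ((1 + w) / (1 + 2 * w)) := by
  intro covY covU covFull
  have h1 : covY.det = 3 := by simp [covY, Matrix.det_fin_two_of]; ring
  have h2 : covU.det = 8 * (1 + w) := by simp [covU, Matrix.det_fin_two_of]; ring
  have h3 : covFull.det = 3 * (1 + 2 * w) := by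
    simp [covFull, Matrix.det_succ_row_zero, Fin.sum_univ_succ, Fin.succAbove, Matrix.det_fin_two_of, show (Fin.castSucc 2 : Fin 4) = 2 from rfl]
    ring
  have hw1 : (0:ℝ) < 1 + w := by linarith
  have hw2 : (0:ℝ) < 1 + 2 * w := by linarith
  rw [h1, h2, h3]
  have : (3 * (8 * (1 + w))) / (3 * (1 + 2 * w)) = 8 * ((1 + w) / (1 + 2 * w)) := by
    field_simp
  rw [this, Real.log_mul (by norm_num) (by positivity),
    show (8:ℝ) = 2 ^ (3:ℕ) by norm_num, Real.log_pow]
  ring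
end
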